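/- Let {A_i}_{i=1}^m satisfy (2r, δ)-RIP with δ < 1/5, let M* = U*(U*)^T with U* ∈ ℝ^{d×r}, and let f(U) = (1/(2m))Σ_i (⟨A_i, UU^T⟩ − ⟨A_i, M*⟩)². Then every U satisfying ∇f(U) = 0 and ∇²f(U) ⪰ 0 satisfies UU^T = M*. -/

import Mathlib

/-!
Align `U*` with `U`: a polar decomposition gives an orthogonal `O` with `Uᵀ U* Oᵀ` positive
semidefinite, and `V = U* Oᵀ` still satisfies `V Vᵀ = M*`. Put `Δ = U - V` and
`E = U Uᵀ - M*`, so that `U Δᵀ + Δ Uᵀ = E + Δ Δᵀ`. Along the line `U + t Δ` the loss is a quartic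
in `t`; writing `eᵢ = ⟨Aᵢ, E⟩` and `sᵢ = ⟨Aᵢ, Δ Δᵀ⟩`, the first- and second-order conditions in
the direction `Δ` read `∑ eᵢ (eᵢ + sᵢ) = 0` and `∑ ((eᵢ + sᵢ)² + 2 eᵢ sᵢ) ≥ 0`, whence
`∑ sᵢ² ≥ 3 ∑ eᵢ²`. Both `E` and `Δ Δᵀ` have rank at most `2r`, and the alignment gives
`‖Δ Δᵀ‖² ≤ 2 ‖E‖²`, so RIP yields `3 (1 - δ) ‖E‖² ≤ 2 (1 + δ) ‖E‖²`, which forces `E = 0` when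
`δ < 1/5`.
-/

open Matrix BigOperators

noncomputable section

attribute [local instance] Matrix.normedAddCommGroup Matrix.normedSpace

def frobSq {m n : Type*} [Fintype m] [Fintype n] (A : Matrix m n ℝ) : ℝ :=
  ∑ i, ∑ j, (A i j) ^ 2

namespace Matrix

variable {n : Type*} [Fintype n]

lemma isClosed_setOf_posSemidef : IsClosed {M : Matrix n n ℝ | M.PosSemidef} := by
  simp only [posSemidef_iff_dotProduct_mulVec, Set.ofPred_and, Set.ofPred_forall]
  refine .inter (isClosed_eq (by fun_prop) continuous_id) (isClosed_iInter fun x => ?_)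
  exact isClosed_le continuous_const (by fun_prop)

open scoped MatrixOrder in
lemma PosSemidef.trace_mul_nonneg {P S : Matrix n n ℝ} (hP : P.PosSemidef) (hS : S.PosSemidef) :
    0 ≤ trace (P * S) := by
  classical
  obtain ⟨B, rfl⟩ := CStarAlgebra.nonneg_iff_eq_star_mul_self.mp hP.nonneg
  rw [star_eq_conjTranspose, Matrix.mul_assoc, trace_mul_comm]
  simpa [Matrix.mul_assoc] using (hS.mul_mul_conjTranspose_same B).trace_nonneg

variable [DecidableEq n]

lemma isCompact_setOf_mul_transpose_eq_one :
    IsCompact {O : Matrix n n ℝ | O * Oᵀ = 1} := by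
  refine Metric.isCompact_of_isClosed_isBounded (isClosed_eq (by fun_prop) continuous_const)
    ((Metric.isBounded_closedBall (x := 0) (r := 1)).subset fun O hO => ?_)
  rw [Metric.mem_closedBall, dist_zero_right, Matrix.norm_le_iff zero_le_one]
  intro i j
  have hrow : ∑ k, O i k ^ 2 = 1 := by
    simpa [Matrix.mul_apply, sq] using congrFun (congrFun hO i) i
  have : O i j ^ 2 ≤ 1 :=
    hrow ▸ Finset.single_le_sum (fun k _ => sq_nonneg (O i k)) (Finset.mem_univ j)
  rw [Real.norm_eq_abs]
  exact abs_le_one_iff_mul_self_le_one.mpr (by nlinarith)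

open scoped MatrixOrder in
lemma exists_orthogonal_mul_posSemidef_of_isUnit {M : Matrix n n ℝ} (hM : IsUnit M) :
    ∃ O : Matrix n n ℝ, O * Oᵀ = 1 ∧ (M * Oᵀ).PosSemidef := by
  have hMM : (M * Mᵀ).PosSemidef := by
    simpa [conjTranspose_eq_transpose_of_trivial] using posSemidef_self_mul_conjTranspose M
  set P := CFC.sqrt (M * Mᵀ)
  have hP : P.PosSemidef := (CFC.sqrt_nonneg (M * Mᵀ)).posSemidef
  have hPP : P * P = M * Mᵀ := CFC.sqrt_mul_sqrt_self _ hMM.nonneg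
  have hPT : Pᵀ = P := by simpa [conjTranspose_eq_transpose_of_trivial] using hP.isHermitian.eq
  have hPdet : IsUnit P.det := by
    rw [← isUnit_iff_isUnit_det]
    exact isUnit_of_mul_isUnit_left (hPP ▸ hM.mul ((isUnit_transpose M).mpr hM))
  have hOT : (P⁻¹ * M)ᵀ = Mᵀ * P⁻¹ := by rw [transpose_mul, transpose_nonsing_inv, hPT]
  refine ⟨P⁻¹ * M, ?_, ?_⟩
  · rw [hOT, Matrix.mul_assoc, ← Matrix.mul_assoc M, ← hPP,
      mul_nonsing_inv_cancel_right _ _ hPdet, nonsing_inv_mul _ hPdet]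
  · rwa [hOT, ← Matrix.mul_assoc, ← hPP, Matrix.mul_assoc, mul_nonsing_inv _ hPdet,
      Matrix.mul_one]

lemma isClosed_setOf_exists_orthogonal_mul_posSemidef :
    IsClosed {M : Matrix n n ℝ | ∃ O : Matrix n n ℝ, O * Oᵀ = 1 ∧ (M * Oᵀ).PosSemidef} := by
  set K := {O : Matrix n n ℝ | O * Oᵀ = 1}
  have : CompactSpace K := isCompact_iff_compactSpace.mp isCompact_setOf_mul_transpose_eq_one
  have hS : IsClosed {p : Matrix n n ℝ × K | (p.1 * (p.2 : Matrix n n ℝ)ᵀ).PosSemidef} :=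
    isClosed_setOf_posSemidef.preimage (by fun_prop)
  convert isClosedMap_fst_of_compactSpace _ hS using 1
  ext M
  simp [K]

lemma dense_setOf_isUnit_add_smul_one (M : Matrix n n ℝ) :
    Dense {t : ℝ | IsUnit (M + t • (1 : Matrix n n ℝ))} := by
  refine ((M.finite_spectrum.image Neg.neg).countable.dense_compl ℝ).mono fun t ht => ?_
  by_contra h
  refine ht ⟨-t, ?_, neg_neg t⟩
  rw [spectrum.mem_iff, Algebra.algebraMap_eq_smul_one, neg_smul, ← neg_add', IsUnit.neg_iff,
    add_comm]
  exact h

/-- Polar decomposition. The invertible case is settled by the square root of `M Mᵀ`; it extends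
to all `M` because the matrices admitting such an `O` form a closed set (the orthogonal group is
compact), and `M + t • 1` is invertible for all but finitely many `t`. -/
theorem exists_orthogonal_mul_posSemidef (M : Matrix n n ℝ) :
    ∃ O : Matrix n n ℝ, O * Oᵀ = 1 ∧ (M * Oᵀ).PosSemidef := by
  have hpath : Continuous fun t : ℝ => M + t • (1 : Matrix n n ℝ) := by fun_prop
  have hclosed := isClosed_setOf_exists_orthogonal_mul_posSemidef.preimage hpath
  have hall := (dense_setOf_isUnit_add_smul_one M).closure_eq ▸
    (closure_mono fun t ht => exists_orthogonal_mul_posSemidef_of_isUnit ht).trans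
      hclosed.closure_subset
  simpa using hall (Set.mem_univ 0)

end Matrix

lemma exists_mul_transpose_eq_and_posSemidef {m n : Type*} [Fintype m] [Fintype n]
    [DecidableEq n] (U W : Matrix m n ℝ) :
    ∃ V : Matrix m n ℝ, V * Vᵀ = W * Wᵀ ∧ (Uᵀ * V).PosSemidef := by
  obtain ⟨O, hO, hpsd⟩ := exists_orthogonal_mul_posSemidef (Uᵀ * W)
  refine ⟨W * Oᵀ, ?_, by rwa [← Matrix.mul_assoc]⟩
  rw [transpose_mul, transpose_transpose, Matrix.mul_assoc, ← Matrix.mul_assoc Oᵀ,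
    mul_eq_one_comm.mp hO, Matrix.one_mul]

section Frobenius

variable {m n : Type*} [Fintype m] [Fintype n]

lemma frobSq_nonneg (M : Matrix m n ℝ) : 0 ≤ frobSq M := by
  unfold frobSq
  positivity

lemma frobSq_eq_zero_iff {M : Matrix m n ℝ} : frobSq M = 0 ↔ M = 0 := by
  simp [frobSq, Finset.sum_eq_zero_iff_of_nonneg, sq_nonneg, Finset.sum_nonneg, ← Matrix.ext_iff]

lemma frobSq_eq_trace (M : Matrix m n ℝ) : frobSq M = trace (M * Mᵀ) := by
  simp [frobSq, trace, Matrix.mul_apply, sq]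

lemma trace_mul_transpose_mul_mul_transpose (X Y : Matrix m n ℝ) :
    trace (X * Xᵀ * (Y * Yᵀ)) = trace (Xᵀ * Y * (Yᵀ * X)) := by
  rw [Matrix.mul_assoc, trace_mul_comm]
  simp only [Matrix.mul_assoc]

lemma frobSq_mul_transpose_self (X : Matrix m n ℝ) :
    frobSq (X * Xᵀ) = trace (Xᵀ * X * (Xᵀ * X)) := by
  rw [frobSq_eq_trace, transpose_mul, transpose_transpose, trace_mul_transpose_mul_mul_transpose]

/-- With `Δ = U - V` and `P = Uᵀ V` symmetric, `2 ‖U Uᵀ - V Vᵀ‖² - ‖Δ Δᵀ‖²` equals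
`‖Uᵀ U - Vᵀ V‖² + 4 tr (P Δᵀ Δ)`, and both terms are nonnegative when `P` is. -/
lemma frobSq_sub_mul_transpose_sub_le (U V : Matrix m n ℝ) (hUV : (Uᵀ * V).PosSemidef) :
    frobSq ((U - V) * (U - V)ᵀ) ≤ 2 * frobSq (U * Uᵀ - V * Vᵀ) := by
  set A := Uᵀ * U
  set B := Vᵀ * V
  set P := Uᵀ * V
  set S := (U - V)ᵀ * (U - V)
  have hVU : Vᵀ * U = P := by
    rw [← hUV.isHermitian.eq, conjTranspose_eq_transpose_of_trivial, transpose_mul,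
      transpose_transpose]
  have hS : S = A + B - 2 • P := by
    simp only [S, transpose_sub, Matrix.sub_mul, Matrix.mul_sub, hVU, two_smul]
    abel
  have hΔ : frobSq ((U - V) * (U - V)ᵀ) = trace (S * S) := frobSq_mul_transpose_self _
  have hE : frobSq (U * Uᵀ - V * Vᵀ) = trace (A * A) + trace (B * B) - 2 * trace (P * P) := by
    rw [frobSq_eq_trace, transpose_sub, transpose_mul, transpose_mul, transpose_transpose,
      transpose_transpose]
    simp only [Matrix.sub_mul, Matrix.mul_sub, trace_sub, trace_mul_transpose_mul_mul_transpose,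
      hVU]
    ring
  have hAB : 0 ≤ trace ((A - B) * (A - B)) := by
    have hsymm : (A - B)ᵀ = A - B := by simp [A, B, transpose_sub, transpose_mul]
    have := frobSq_nonneg (A - B)
    rwa [frobSq_eq_trace, hsymm] at this
  have hPS : 0 ≤ trace (P * S) := by
    have hSpsd := posSemidef_conjTranspose_mul_self (U - V)
    rw [conjTranspose_eq_transpose_of_trivial] at hSpsd
    exact hUV.trace_mul_nonneg hSpsd
  have hcyc : trace (S * S) + trace ((A - B) * (A - B)) + 4 * trace (P * S)
      = 2 * (trace (A * A) + trace (B * B) - 2 * trace (P * P)) := by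
    simp only [hS, add_mul, mul_add, sub_mul, mul_sub, smul_mul, Matrix.mul_smul, trace_add,
      trace_sub, trace_smul, trace_mul_comm B A, trace_mul_comm P A, trace_mul_comm P B]
    ring
  rw [hΔ, hE]
  linarith

end Frobenius

section LineDerivatives

variable {E F : Type*} [NormedAddCommGroup E] [NormedSpace ℝ E] [NormedAddCommGroup F]
  [NormedSpace ℝ F]

lemma hasDerivAt_comp_add_smul {f : E → F} {x v : E} {t : ℝ}
    (hf : DifferentiableAt ℝ f (x + t • v)) :
    HasDerivAt (fun s : ℝ => f (x + s • v)) (fderiv ℝ f (x + t • v) v) t := by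
  have hline : HasDerivAt (fun s : ℝ => x + s • v) v t := by
    simpa using ((hasDerivAt_id t).smul_const v).const_add x
  exact hf.hasFDerivAt.comp_hasDerivAt t hline

lemma hasDerivAt_fderiv_comp_add_smul {f : E → F} (hf : ContDiff ℝ 2 f) (x v : E) :
    HasDerivAt (fun t : ℝ => fderiv ℝ f (x + t • v) v) (iteratedFDeriv ℝ 2 f x ![v, v]) 0 := by
  have hdiff : DifferentiableAt ℝ (fderiv ℝ f) (x + (0 : ℝ) • v) :=
    (hf.fderiv_right le_rfl).differentiable one_ne_zero _
  have := (hasDerivAt_comp_add_smul hdiff).clm_apply (hasDerivAt_const 0 v)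
  simpa [iteratedFDeriv_two_apply] using this

lemma hasDerivAt_quadratic (e q s t : ℝ) :
    HasDerivAt (fun t : ℝ => e + q * t + s * t ^ 2) (q + 2 * s * t) t :=
  ((((hasDerivAt_id' t).const_mul q).const_add e).fun_add
    ((hasDerivAt_pow 2 t).const_mul s)).congr_deriv (by norm_num; ring)

lemma hasDerivAt_sq_quadratic (e q s t : ℝ) :
    HasDerivAt (fun t : ℝ => (e + q * t + s * t ^ 2) ^ 2)
      (2 * (e + q * t + s * t ^ 2) * (q + 2 * s * t)) t :=
  ((hasDerivAt_quadratic e q s t).fun_pow 2).congr_deriv (by norm_num)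

lemma hasDerivAt_deriv_sq_quadratic (e q s t : ℝ) :
    HasDerivAt (fun t : ℝ => 2 * (e + q * t + s * t ^ 2) * (q + 2 * s * t))
      (2 * (q + 2 * s * t) ^ 2 + 4 * (e + q * t + s * t ^ 2) * s) t := by
  have hlin : HasDerivAt (fun t : ℝ => q + 2 * s * t) (2 * s) t := by
    simpa using ((hasDerivAt_id' t).const_mul (2 * s)).const_add q
  exact (((hasDerivAt_quadratic e q s t).const_mul 2).fun_mul hlin).congr_deriv (by ring)

lemma fderiv_and_iteratedFDeriv_of_eq_sum_sq {ι : Type*} [Fintype ι] {f : E → ℝ}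
    (hf : ContDiff ℝ 2 f) {x v : E} {c : ℝ} {e q s : ι → ℝ}
    (hline : ∀ t : ℝ, f (x + t • v) = c * ∑ i, (e i + q i * t + s i * t ^ 2) ^ 2) :
    fderiv ℝ f x v = c * ∑ i, 2 * e i * q i ∧
      iteratedFDeriv ℝ 2 f x ![v, v] = c * ∑ i, (2 * q i ^ 2 + 4 * e i * s i) := by
  have hderiv (t : ℝ) : fderiv ℝ f (x + t • v) v
      = c * ∑ i, 2 * (e i + q i * t + s i * t ^ 2) * (q i + 2 * s i * t) := by
    refine (hasDerivAt_comp_add_smul (hf.differentiable two_ne_zero _)).unique ?_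
    simp only [hline]
    exact (HasDerivAt.fun_sum fun i _ => hasDerivAt_sq_quadratic (e i) (q i) (s i) t).const_mul c
  constructor
  · simpa using hderiv 0
  · refine (hasDerivAt_fderiv_comp_add_smul hf x v).unique ?_
    simp only [hderiv]
    simpa using (HasDerivAt.fun_sum fun i _ =>
      hasDerivAt_deriv_sq_quadratic (e i) (q i) (s i) 0).const_mul c

end LineDerivatives

lemma three_mul_le_of_stationary {ι : Type*} [Fintype ι] {c : ℝ} {e s : ι → ℝ}
    (hgrad : c * ∑ i, 2 * e i * (e i + s i) = 0)
    (hhess : 0 ≤ c * ∑ i, (2 * (e i + s i) ^ 2 + 4 * e i * s i)) :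
    3 * (c * ∑ i, e i ^ 2) ≤ c * ∑ i, s i ^ 2 := by
  have h1 : ∑ i, 2 * e i * (e i + s i) = 2 * ∑ i, e i ^ 2 + 2 * ∑ i, e i * s i := by
    simp only [Finset.mul_sum, ← Finset.sum_add_distrib]
    exact Finset.sum_congr rfl fun i _ => by ring
  have h2 : ∑ i, (2 * (e i + s i) ^ 2 + 4 * e i * s i)
      = 2 * ∑ i, e i ^ 2 + 8 * ∑ i, e i * s i + 2 * ∑ i, s i ^ 2 := by
    simp only [Finset.mul_sum, ← Finset.sum_add_distrib]
    exact Finset.sum_congr rfl fun i _ => by ring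
  rw [h1] at hgrad
  rw [h2] at hhess
  linarith

section Sensing

def frobInner {m n : Type*} [Fintype m] [Fintype n] (B : Matrix m n ℝ) :
    Matrix m n ℝ →ₗ[ℝ] ℝ where
  toFun M := ∑ a, ∑ b, B a b * M a b
  map_add' M N := by simp only [Matrix.add_apply, mul_add, Finset.sum_add_distrib]
  map_smul' c M := by
    simp only [Matrix.smul_apply, smul_eq_mul, Finset.mul_sum, RingHom.id_apply, mul_left_comm]

lemma add_smul_mul_transpose_add_smul {n k : Type*} [Fintype k] (U Z : Matrix n k ℝ) (t : ℝ) :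
    (U + t • Z) * (U + t • Z)ᵀ = U * Uᵀ + t • (U * Zᵀ + Z * Uᵀ) + t ^ 2 • (Z * Zᵀ) := by
  simp only [transpose_add, transpose_smul, Matrix.add_mul, Matrix.mul_add, Matrix.smul_mul,
    Matrix.mul_smul, smul_smul, smul_add]
  module

lemma mul_transpose_sub_add_sub_mul_transpose {n k : Type*} [Fintype k] (U V : Matrix n k ℝ) :
    U * (U - V)ᵀ + (U - V) * Uᵀ = (U * Uᵀ - V * Vᵀ) + (U - V) * (U - V)ᵀ := by
  simp only [transpose_sub, Matrix.mul_sub, Matrix.sub_mul]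
  abel

variable {ι n k : Type*} [Fintype ι] [Fintype n] [Fintype k]

def sensingLoss (A : ι → Matrix n n ℝ) (y : ι → ℝ) (c : ℝ) (U : Matrix n k ℝ) : ℝ :=
  c * ∑ i, (frobInner (A i) (U * Uᵀ) - y i) ^ 2

lemma contDiff_sensingLoss (A : ι → Matrix n n ℝ) (y : ι → ℝ) (c : ℝ) {N : WithTop ℕ∞} :
    ContDiff ℝ N (sensingLoss (k := k) A y c) := by
  have hlin (i : ι) : ContDiff ℝ N (frobInner (A i)) :=
    (LinearMap.toContinuousLinearMap (frobInner (A i))).contDiff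
  have hgram : ContDiff ℝ N fun U : Matrix n k ℝ => U * Uᵀ := by
    refine contDiff_pi.2 fun a => contDiff_pi.2 fun b => ?_
    simp only [mul_apply, transpose_apply]
    fun_prop
  unfold sensingLoss
  fun_prop

lemma sensingLoss_add_smul (A : ι → Matrix n n ℝ) (y : ι → ℝ) (c : ℝ) (U Z : Matrix n k ℝ)
    (t : ℝ) :
    sensingLoss A y c (U + t • Z) = c * ∑ i, ((frobInner (A i) (U * Uᵀ) - y i)
      + frobInner (A i) (U * Zᵀ + Z * Uᵀ) * t + frobInner (A i) (Z * Zᵀ) * t ^ 2) ^ 2 := by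
  simp only [sensingLoss, add_smul_mul_transpose_add_smul, map_add, map_smul, smul_eq_mul]
  congr! 3
  ring

lemma rank_mul_transpose_sub_mul_transpose_le [DecidableEq n] (U V : Matrix n k ℝ) :
    (U * Uᵀ - V * Vᵀ).rank ≤ 2 * Fintype.card k := by
  rw [sub_eq_add_neg, ← Matrix.mul_neg, ← fromCols_mul_fromRows]
  calc _ ≤ (fromCols U V).rank := rank_mul_le_left _ _
    _ ≤ Fintype.card (k ⊕ k) := rank_le_card_width _
    _ = 2 * Fintype.card k := by rw [Fintype.card_sum, two_mul]

end Sensing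

/-- No spurious local minima for symmetric matrix sensing: if the sensing matrices
`{A_i}` satisfy `(2r, δ)`-RIP with `δ < 1/5` and
`f(U) = (1/(2m))Σ_i (⟨A_i, UUᵀ⟩ − ⟨A_i, M*⟩)²` with `M* = U*(U*)ᵀ`, then every `U`
with `∇f(U) = 0` and `∇²f(U) ⪰ 0` satisfies `UUᵀ = M*`. -/
theorem stmt11 {d r m : ℕ} (A : Fin m → Matrix (Fin d) (Fin d) ℝ) (δ : ℝ)
    (hδ : δ < 1 / 5)
    (hRIP : ∀ M : Matrix (Fin d) (Fin d) ℝ, M.rank ≤ 2 * r →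
      (1 - δ) * frobSq M ≤ (1 / (m : ℝ)) * ∑ i, (∑ a, ∑ b, A i a b * M a b) ^ 2 ∧
        (1 / (m : ℝ)) * ∑ i, (∑ a, ∑ b, A i a b * M a b) ^ 2 ≤ (1 + δ) * frobSq M)
    (Ustar : Matrix (Fin d) (Fin r) ℝ)
    (f : Matrix (Fin d) (Fin r) ℝ → ℝ)
    (hf : f = fun U => (1 / (2 * (m : ℝ))) * ∑ i,
      ((∑ a, ∑ b, A i a b * (U * Uᵀ) a b) - ∑ a, ∑ b, A i a b * (Ustar * Ustarᵀ) a b) ^ 2)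
    (U : Matrix (Fin d) (Fin r) ℝ)
    (hgrad : fderiv ℝ f U = 0)
    (hhess : ∀ Z : Matrix (Fin d) (Fin r) ℝ, 0 ≤ iteratedFDeriv ℝ 2 f U ![Z, Z]) :
    U * Uᵀ = Ustar * Ustarᵀ := by
  obtain ⟨V, hVV, hpsd⟩ := exists_mul_transpose_eq_and_posSemidef U Ustar
  rw [← hVV] at hf ⊢
  set Z := U - V
  set E := U * Uᵀ - V * Vᵀ
  have hf' : f = sensingLoss A (fun i => frobInner (A i) (V * Vᵀ)) (1 / (2 * m)) := hf
  obtain ⟨hfirst, hsecond⟩ := fderiv_and_iteratedFDeriv_of_eq_sum_sq (x := U) (v := Z)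
    (hf' ▸ contDiff_sensingLoss _ _ _) (hf' ▸ sensingLoss_add_smul A _ _ U Z)
  have hcross : U * Zᵀ + Z * Uᵀ = E + Z * Zᵀ := mul_transpose_sub_add_sub_mul_transpose U V
  simp only [hcross, map_add, ← map_sub] at hfirst hsecond
  have hquad : 3 * (1 / (m : ℝ) * ∑ i, frobInner (A i) E ^ 2)
      ≤ 1 / (m : ℝ) * ∑ i, frobInner (A i) (Z * Zᵀ) ^ 2 := by
    have := three_mul_le_of_stationary (hgrad ▸ hfirst).symm (hsecond ▸ hhess Z)
    rw [show 1 / (m : ℝ) = 2 * (1 / (2 * m)) by ring]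
    linarith
  have hE : (1 - δ) * frobSq E ≤ 1 / (m : ℝ) * ∑ i, frobInner (A i) E ^ 2 :=
    (hRIP E ((rank_mul_transpose_sub_mul_transpose_le U V).trans_eq (by simp))).1
  have hZ : 1 / (m : ℝ) * ∑ i, frobInner (A i) (Z * Zᵀ) ^ 2 ≤ (1 + δ) * frobSq (Z * Zᵀ) :=
    (hRIP (Z * Zᵀ) ((rank_mul_le_left _ _).trans ((rank_le_width Z).trans (by omega)))).2
  have hZE : frobSq (Z * Zᵀ) ≤ 2 * frobSq E := frobSq_sub_mul_transpose_sub_le U V hpsd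
  have hE0 : frobSq E ≤ 0 := by
    rcases le_or_gt 0 (1 + δ) with h | h
    · nlinarith [frobSq_nonneg E]
    · nlinarith [frobSq_nonneg E, frobSq_nonneg (Z * Zᵀ)]
  exact sub_eq_zero.mp (frobSq_eq_zero_iff.mp (le_antisymm hE0 (frobSq_nonneg E)))
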